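/- Let A be a semiperfect ring whose Jacobson radical m satisfies ⋂ₙ mⁿ = 0, and let M be a finitely generated left A-module such that Hom_A(M, −) is an exact functor on the category of finite-length left A-modules. Then M is projective. -/

import Mathlib

open CategoryTheory

/-- `f : P →ₗ[A] M` is a projective cover: `P` is projective, `f` is surjective, and the
kernel of `f` is superfluous in `P`. -/
def IsProjectiveCover {A : Type u} [Ring A] {P M : Type u} [AddCommGroup P] [Module A P]
    [AddCommGroup M] [Module A M] (f : P →ₗ[A] M) : Prop :=
  Module.Projective A P ∧ Function.Surjective f ∧
    ∀ N : Submodule A P, N ⊔ LinearMap.ker f = ⊤ → N = ⊤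

/-- A ring is semiperfect iff every finitely generated left module admits a projective
cover (Lam, Proposition 24.12). -/
def IsSemiperfectRing (A : Type u) [Ring A] : Prop :=
  ∀ (M : Type u) [AddCommGroup M] [Module A M], Module.Finite A M →
    ∃ (P : Type u) (_ : AddCommGroup P) (_ : Module A P) (f : P →ₗ[A] M),
      IsProjectiveCover f

/-- The submodule `mⁿM` for a left ideal `m`, defined by iterated ideal `•`. -/
def idealPowSMulTop {A : Type u} [Ring A] (J : Ideal A) (M : Type u) [AddCommGroup M]
    [Module A M] (n : ℕ) : Submodule A M :=
  (fun N : Submodule A M => J • N)^[n] ⊤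

/-!
Let `J` be the Jacobson radical and `f : P → M` a projective cover; `P` is finitely generated
because `ker f` is superfluous. Finitely generated modules killed by `J` are semisimple (lift a
projective cover of `X / S` to `X` to get a complement of `S`), so those killed by a power `Jⁿ`
have finite length. The hypothesis therefore lifts `M → M / JⁿM` along `P / JⁿP → M / JⁿM`,
which splits this surjection; its kernel is superfluous, so it is an isomorphism and
`ker f ⊆ JⁿP`. As `P` is a direct summand of a free module and `⋂ₙ Jⁿ = 0`, also `⋂ₙ JⁿP = 0`,
so `f` is an isomorphism.
-/

universe u

open Submodule LinearMap

namespace Submodule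

variable {A : Type*} [Ring A] {P M : Type*} [AddCommGroup P] [Module A P]
  [AddCommGroup M] [Module A M]

def IsSuperfluous (K : Submodule A P) : Prop :=
  ∀ N : Submodule A P, N ⊔ K = ⊤ → N = ⊤

theorem IsSuperfluous.le_jacobson {K : Submodule A P} (hK : K.IsSuperfluous) :
    K ≤ Module.jacobson A P :=
  le_sInf fun N hN => by_contra fun hKN => hN.1 (hK N (hN.2 _ (left_lt_sup.mpr hKN)))

theorem IsSuperfluous.map {K : Submodule A P} (hK : K.IsSuperfluous) {f : P →ₗ[A] M}
    (hf : Function.Surjective f) : (K.map f).IsSuperfluous := by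
  intro N hN
  have hcomap : N.comap f ⊔ K = ⊤ := by
    refine eq_top_iff.mpr fun x _ => ?_
    obtain ⟨n, hn, _, ⟨k, hk, rfl⟩, hx⟩ := mem_sup.mp (hN ▸ mem_top : f x ∈ N ⊔ K.map f)
    exact mem_sup.mpr ⟨x - k, by simp [← hx, hn], k, hk, by abel⟩
  rw [← map_comap_eq_of_surjective hf N, hK _ hcomap, map_top, range_eq_top.mpr hf]

theorem IsSuperfluous.ker_eq_bot_of_comp_eq_id {f : P →ₗ[A] M} (hK : (ker f).IsSuperfluous)
    {s : M →ₗ[A] P} (hs : f ∘ₗ s = LinearMap.id) : ker f = ⊥ := by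
  have hfs : ∀ m, f (s m) = m := fun m => LinearMap.congr_fun hs m
  have hrange : range s = ⊤ := hK _ <| eq_top_iff.mpr fun x _ =>
    mem_sup.mpr ⟨s (f x), mem_range_self s _, x - s (f x), by simp [hfs], by abel⟩
  refine eq_bot_iff.mpr fun x hx => ?_
  obtain ⟨m, rfl⟩ := range_eq_top.mp hrange x
  rw [mem_ker, hfs] at hx
  simp [hx]

theorem IsSuperfluous.ker_le_of_lift {f : P →ₗ[A] M} (hK : (ker f).IsSuperfluous)
    {Q : Submodule A P} {h : M →ₗ[A] P ⧸ Q}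
    (hh : Q.mapQ (Q.map f) f (le_comap_map f Q) ∘ₗ h = (Q.map f).mkQ)
    (hQ : Q.map f ≤ ker h) : ker f ≤ Q := by
  have hker : ker (Q.mapQ (Q.map f) f (le_comap_map f Q)) = (ker f).map Q.mkQ := by
    rw [ker_mapQ, comap_map_eq, Submodule.map_sup, mkQ_map_self, bot_sup_eq]
  have hsplit : Q.mapQ (Q.map f) f (le_comap_map f Q) ∘ₗ (Q.map f).liftQ h hQ = LinearMap.id :=
    linearMap_qext _ (by rw [LinearMap.comp_assoc, liftQ_mkQ, hh, LinearMap.id_comp])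
  have hbot := (hker ▸ hK.map Q.mkQ_surjective).ker_eq_bot_of_comp_eq_id hsplit
  rwa [hker, ← le_ker_iff_map, ker_mkQ] at hbot

theorem map_smul_top_le (I : Ideal A) (f : P →ₗ[A] M) :
    (I • ⊤ : Submodule A P).map f ≤ I • ⊤ := by
  rw [map_smul'']
  exact smul_mono_right _ le_top

theorem smul_top_quotient_eq_bot {I : Ideal A} {N : Submodule A P} (h : I • ⊤ ≤ N) :
    I • (⊤ : Submodule A (P ⧸ N)) = ⊥ := by
  rw [← N.range_mkQ, ← map_top, ← map_smul'', ← le_bot_iff, ← N.mkQ_map_self]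
  exact map_mono h

theorem iterate_smul_eq_pow_smul (I : Ideal A) (n : ℕ) (N : Submodule A P) :
    (fun N : Submodule A P => I • N)^[n] N = I ^ n • N := by
  induction n generalizing N with
  | zero =>
    rw [Function.iterate_zero_apply, Submodule.pow_zero, Ideal.one_eq_top, top_smul]
  | succ n ih =>
    rw [Function.iterate_succ_apply, ih, ← Submodule.smul_assoc, Ideal.smul_eq_mul,
      ← Submodule.pow_succ]

theorem mem_smul_top_of_forall_dual_mem [Module.Projective A P] (I : Ideal A) {x : P}
    (hx : ∀ g : Module.Dual A P, g x ∈ I) : x ∈ I • (⊤ : Submodule A P) := by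
  obtain ⟨s, hs⟩ := Module.projective_def'.mp ‹_›
  rw [← LinearMap.id_apply (R := A) x, ← hs, LinearMap.comp_apply,
    Finsupp.linearCombination_apply]
  exact sum_mem fun p _ => smul_mem_smul (hx (Finsupp.lapply p ∘ₗ s)) mem_top

end Submodule

section Projective

variable {A : Type*} [Ring A] {P M : Type*} [AddCommGroup P] [Module A P] [AddCommGroup M]
  [Module A M]

theorem Module.Projective.jacobson_le_smul_top [Module.Projective A P] :
    Module.jacobson A P ≤ Ring.jacobson A • (⊤ : Submodule A P) :=
  fun _ hx => mem_smul_top_of_forall_dual_mem _ fun g => Module.le_comap_jacobson g hx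

theorem Module.Projective.iInf_pow_smul_top_eq_bot [Module.Projective A P] {I : Ideal A}
    (hI : ⨅ n : ℕ, I ^ n • (⊤ : Submodule A A) = ⊥) :
    ⨅ n : ℕ, I ^ n • (⊤ : Submodule A P) = ⊥ := by
  refine eq_bot_iff.mpr fun x hx => (mem_bot A).mpr ?_
  refine (Module.forall_dual_apply_eq_zero_iff A x).mp fun g => ?_
  rw [← mem_bot A, ← hI, mem_iInf]
  exact fun n => map_smul_top_le _ g (mem_map_of_mem ((mem_iInf _).mp hx n))

theorem Module.Finite.of_surjective_of_isSuperfluous_ker [Module.Finite A M] {f : P →ₗ[A] M}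
    (hf : Function.Surjective f) (hK : (ker f).IsSuperfluous) : Module.Finite A P := by
  obtain ⟨k, φ, hφ⟩ := Module.Finite.exists_fin' A M
  obtain ⟨ψ, hψ⟩ := Module.projective_lifting_property f φ hf
  have hsup : LinearMap.range ψ ⊔ ker f = ⊤ := by
    rw [← comap_map_eq, ← range_comp, hψ, range_eq_top.mpr hφ, comap_top]
  exact Module.Finite.of_surjective ψ (range_eq_top.mp (hK _ hsup))

end Projective

def Module.LiftsAlongFiniteLengthSurjections (A : Type u) [Ring A] (M : Type u) [AddCommGroup M]
    [Module A M] : Prop :=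
  ∀ (Y Z : Type u) [AddCommGroup Y] [Module A Y] [AddCommGroup Z] [Module A Z],
    IsFiniteLength A Y → IsFiniteLength A Z → ∀ g : Y →ₗ[A] Z, Function.Surjective g →
      ∀ φ : M →ₗ[A] Z, ∃ ψ : M →ₗ[A] Y, g ∘ₗ ψ = φ

section Semiperfect

variable {A : Type u} [Ring A]

theorem isSemisimpleModule_of_jacobson_smul_top_eq_bot (hsp : IsSemiperfectRing A)
    (X : Type u) [AddCommGroup X] [Module A X] [Module.Finite A X]
    (hX : Ring.jacobson A • (⊤ : Submodule A X) = ⊥) : IsSemisimpleModule A X := by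
  refine (isSemisimpleModule_iff A X).mpr ⟨fun S => ?_⟩
  obtain ⟨P, _, _, f, hP, hf, hK⟩ := hsp (X ⧸ S) inferInstance
  obtain ⟨φ, hφ⟩ := Module.projective_lifting_property S.mkQ f S.mkQ_surjective
  have hφf : ∀ p, S.mkQ (φ p) = f p := fun p => LinearMap.congr_fun hφ p
  -- `ker f` lies in the radical of `P`, which `φ` maps into the radical `0` of `X`.
  have hker : ker f ≤ ker φ := fun p hp => by
    have hrad := (IsSuperfluous.le_jacobson hK).trans Module.Projective.jacobson_le_smul_top hp
    simpa [hX] using map_smul_top_le _ φ (mem_map_of_mem hrad)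
  refine ⟨range φ, disjoint_iff.mpr (eq_bot_iff.mpr ?_), codisjoint_iff.mpr (eq_top_iff.mpr ?_)⟩
  · rintro _ ⟨hS, p, rfl⟩
    have hp : p ∈ ker f := by rwa [mem_ker, ← hφf, mkQ_apply, Quotient.mk_eq_zero]
    exact hker hp
  · intro x _
    obtain ⟨p, hp⟩ := hf (S.mkQ x)
    refine mem_sup.mpr ⟨x - φ p, ?_, φ p, mem_range_self φ p, sub_add_cancel x _⟩
    rw [← Quotient.mk_eq_zero, Quotient.mk_sub, ← mkQ_apply, ← mkQ_apply, hφf, hp, sub_self]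

theorem isArtinian_of_pow_jacobson_smul_top_eq_bot [IsNoetherianRing A]
    (hsp : IsSemiperfectRing A) (n : ℕ) (X : Type u) [AddCommGroup X] [Module A X]
    [Module.Finite A X] (hX : Ring.jacobson A ^ n • (⊤ : Submodule A X) = ⊥) :
    IsArtinian A X := by
  induction n generalizing X with
  | zero =>
    rw [Submodule.pow_zero, Ideal.one_eq_top, top_smul] at hX
    have := (Submodule.subsingleton_iff A).mp (subsingleton_iff_bot_eq_top.mp hX.symm)
    infer_instance
  | succ n ih =>
    let S := Ring.jacobson A • (⊤ : Submodule A X)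
    have hS : Ring.jacobson A ^ n • (⊤ : Submodule A S) = ⊥ := by
      refine map_injective_of_injective S.injective_subtype ?_
      rw [map_smul'', Submodule.map_top, range_subtype, Submodule.map_bot, ← Submodule.smul_assoc,
        Ideal.smul_eq_mul, ← Submodule.pow_succ, hX]
    have := ih S hS
    have := isSemisimpleModule_of_jacobson_smul_top_eq_bot hsp (X ⧸ S)
      (smul_top_quotient_eq_bot le_rfl)
    exact (isArtinian_iff_submodule_quotient S).mpr ⟨inferInstance, inferInstance⟩

theorem ker_le_pow_jacobson_smul_top [IsNoetherianRing A] (hsp : IsSemiperfectRing A)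
    {P M : Type u} [AddCommGroup P] [Module A P] [AddCommGroup M] [Module A M]
    [Module.Finite A P] {f : P →ₗ[A] M} (hf : Function.Surjective f)
    (hK : (ker f).IsSuperfluous)
    (hlift : Module.LiftsAlongFiniteLengthSurjections A M)
    (n : ℕ) : ker f ≤ Ring.jacobson A ^ n • (⊤ : Submodule A P) := by
  set Q := Ring.jacobson A ^ n • (⊤ : Submodule A P)
  have hQ : Ring.jacobson A ^ n • (⊤ : Submodule A (P ⧸ Q)) = ⊥ := smul_top_quotient_eq_bot le_rfl
  have hfin : IsFiniteLength A (P ⧸ Q) := isFiniteLength_iff_isNoetherian_isArtinian.mpr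
    ⟨inferInstance, isArtinian_of_pow_jacobson_smul_top_eq_bot hsp n _ hQ⟩
  have hsurj : Function.Surjective (Q.mapQ (Q.map f) f (le_comap_map f Q)) := by
    rintro ⟨m⟩
    obtain ⟨p, rfl⟩ := hf m
    exact ⟨Q.mkQ p, rfl⟩
  obtain ⟨h, hh⟩ := hlift _ _ hfin (hfin.of_surjective hsurj) _ hsurj (Q.map f).mkQ
  refine hK.ker_le_of_lift hh (le_ker_iff_map.mpr (eq_bot_iff.mpr ?_))
  rw [← Submodule.map_comp, ← hQ]
  exact map_smul_top_le _ (h ∘ₗ f)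

end Semiperfect

/-- Let `A` be a noetherian semiperfect ring whose Jacobson radical `m`
satisfies `⋂ₙ mⁿ = 0`, and let `M` be a finitely generated left `A`-module such that
`Hom_A(M, −)` is exact on finite-length left `A`-modules.  Then `M` is projective. -/
theorem projective_of_hom_exact_on_finite_length (A : Type u) [Ring A] [IsNoetherianRing A]
    (hsp : IsSemiperfectRing A)
    (hrad : ⨅ n : ℕ, idealPowSMulTop ((⊥ : Ideal A).jacobson) A n = ⊥)
    (M : Type u) [AddCommGroup M] [Module A M] [Module.Finite A M]
    (hexact : ∀ (X Y Z : Type u) [AddCommGroup X] [Module A X] [AddCommGroup Y] [Module A Y]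
      [AddCommGroup Z] [Module A Z], IsFiniteLength A X → IsFiniteLength A Y →
      IsFiniteLength A Z → ∀ (f : X →ₗ[A] Y) (g : Y →ₗ[A] Z),
        Function.Injective f → Function.Surjective g → Function.Exact f g →
          (Function.Injective (fun h : M →ₗ[A] X => f ∘ₗ h) ∧
           Function.Exact (fun h : M →ₗ[A] X => f ∘ₗ h) (fun h : M →ₗ[A] Y => g ∘ₗ h) ∧
           Function.Surjective (fun h : M →ₗ[A] Y => g ∘ₗ h))) :
    Module.Projective A M := by
  simp only [idealPowSMulTop, iterate_smul_eq_pow_smul, Ideal.jacobson_bot] at hrad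
  obtain ⟨P, _, _, f, hP, hf, hK⟩ := hsp M inferInstance
  have := Module.Finite.of_surjective_of_isSuperfluous_ker hf hK
  have hlift : Module.LiftsAlongFiniteLengthSurjections A M :=
    fun _ _ _ _ _ _ hY hZ g hg => (hexact _ _ _ (hY.of_injective (ker g).injective_subtype) hY hZ
      _ g (ker g).injective_subtype hg (exact_subtype_ker_map g)).2.2
  have hker : ker f = ⊥ := eq_bot_iff.mpr <|
    (le_iInf (ker_le_pow_jacobson_smul_top hsp hf hK hlift)).trans
      (Module.Projective.iInf_pow_smul_top_eq_bot hrad).le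
  exact .of_equiv (LinearEquiv.ofBijective f ⟨ker_eq_bot.mp hker, hf⟩)
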